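/- Let (C, δ, α) be a Hom-coassociative coalgebra and (M, β) a C-comodule with structure map Δ: M → C⊗M. Then Δ̃ = (α²⊗Id_M)∘Δ is the structure map of another C-comodule structure on (M, β). -/

import Mathlib

open TensorProduct

/-- Flip on a tensor product. -/
noncomputable def tauT (K A B : Type*) [Field K] [AddCommGroup A] [Module K A]
    [AddCommGroup B] [Module K B] : A ⊗[K] B →ₗ[K] B ⊗[K] A :=
  (TensorProduct.comm K A B).toLinearMap

/-- Cyclic permutation x₁⊗x₂⊗x₃ ↦ x₃⊗x₁⊗x₂ on A⊗(A⊗A). -/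
noncomputable def cyc (K A : Type*) [Field K] [AddCommGroup A] [Module K A] :
    A ⊗[K] (A ⊗[K] A) →ₗ[K] A ⊗[K] (A ⊗[K] A) :=
  (TensorProduct.comm K (A ⊗[K] A) A).toLinearMap ∘ₗ
    (TensorProduct.assoc K A A A).symm.toLinearMap

/-- τ⊗Id acting on the first two factors of A⊗(A⊗M). -/
noncomputable def swap12 (K A M : Type*) [Field K] [AddCommGroup A] [Module K A]
    [AddCommGroup M] [Module K M] : A ⊗[K] (A ⊗[K] M) →ₗ[K] A ⊗[K] (A ⊗[K] M) :=
  (TensorProduct.assoc K A A M).toLinearMap ∘ₗ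
    TensorProduct.map (tauT K A A) LinearMap.id ∘ₗ
      (TensorProduct.assoc K A A M).symm.toLinearMap

/-- Comodule over a Hom-coassociative coalgebra (C, δ, α). -/
def IsHomComodule (K C M : Type*) [Field K] [AddCommGroup C] [Module K C]
    [AddCommGroup M] [Module K M] (δ : C →ₗ[K] C ⊗[K] C) (α : C →ₗ[K] C)
    (Δ : M →ₗ[K] C ⊗[K] M) (β : M →ₗ[K] M) : Prop :=
  Δ ∘ₗ β = TensorProduct.map α β ∘ₗ Δ ∧
  TensorProduct.map α Δ ∘ₗ Δ =
    (TensorProduct.assoc K C C M).toLinearMap ∘ₗ TensorProduct.map δ β ∘ₗ Δ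

/-- Comodule over a Hom-Lie coalgebra (L, γ, α). -/
def IsHomLieComodule (K L M : Type*) [Field K] [AddCommGroup L] [Module K L]
    [AddCommGroup M] [Module K M] (γ : L →ₗ[K] L ⊗[K] L) (α : L →ₗ[K] L)
    (Γ : M →ₗ[K] L ⊗[K] M) (β : M →ₗ[K] M) : Prop :=
  Γ ∘ₗ β = TensorProduct.map α β ∘ₗ Γ ∧
  (TensorProduct.assoc K L L M).toLinearMap ∘ₗ TensorProduct.map γ β ∘ₗ Γ =
    TensorProduct.map α Γ ∘ₗ Γ - swap12 K L M ∘ₗ TensorProduct.map α Γ ∘ₗ Γ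

/-- Hom-Poisson comodule over (A, δ, γ, α). -/
def IsHomPoissonComodule (K A M : Type*) [Field K] [AddCommGroup A] [Module K A]
    [AddCommGroup M] [Module K M] (δ γ : A →ₗ[K] A ⊗[K] A) (α : A →ₗ[K] A)
    (Δ Γ : M →ₗ[K] A ⊗[K] M) (β : M →ₗ[K] M) : Prop :=
  IsHomComodule K A M δ α Δ β ∧
  IsHomLieComodule K A M γ α Γ β ∧
  TensorProduct.map α Δ ∘ₗ Γ =
    (TensorProduct.assoc K A A M).toLinearMap ∘ₗ TensorProduct.map γ β ∘ₗ Δ +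
      swap12 K A M ∘ₗ TensorProduct.map α Γ ∘ₗ Δ ∧
  (TensorProduct.assoc K A A M).toLinearMap ∘ₗ TensorProduct.map δ β ∘ₗ Γ =
    TensorProduct.map α Γ ∘ₗ Δ + swap12 K A M ∘ₗ TensorProduct.map α Γ ∘ₗ Δ

/-- Cocommutative Hom-Poisson coalgebra. -/
def IsCocommHomPoissonCoalgebra (K A : Type*) [Field K] [AddCommGroup A] [Module K A]
    (δ γ : A →ₗ[K] A ⊗[K] A) (α : A →ₗ[K] A) : Prop :=
  δ = tauT K A A ∘ₗ δ ∧
  δ ∘ₗ α = TensorProduct.map α α ∘ₗ δ ∧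
  TensorProduct.map α δ ∘ₗ δ =
    (TensorProduct.assoc K A A A).toLinearMap ∘ₗ TensorProduct.map δ α ∘ₗ δ ∧
  γ = -(tauT K A A ∘ₗ γ) ∧
  γ ∘ₗ α = TensorProduct.map α α ∘ₗ γ ∧
  (LinearMap.id + cyc K A + cyc K A ∘ₗ cyc K A) ∘ₗ TensorProduct.map α γ ∘ₗ γ = 0 ∧
  TensorProduct.map α δ ∘ₗ γ =
    (TensorProduct.assoc K A A A).toLinearMap ∘ₗ TensorProduct.map γ α ∘ₗ δ +
      swap12 K A A ∘ₗ TensorProduct.map α γ ∘ₗ δ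

/-! Twisting a comodule structure map Δ by a coalgebra endomorphism γ of δ that commutes with
the twisting map α, i.e. replacing Δ by (γ ⊗ Id) ∘ Δ, preserves both comodule axioms: γ slides
past α ⊗ β and α ⊗ Δ, and γ ⊗ γ is absorbed into δ. The theorem is the case γ = α², which is
such an endomorphism because α itself is one by Hom-coassociativity. -/

section TensorMaps

variable {R C M N N' P Q S S' T : Type*} [CommSemiring R] [AddCommMonoid C] [Module R C]
  [AddCommMonoid M] [Module R M] [AddCommMonoid N] [Module R N] [AddCommMonoid N'] [Module R N']
  [AddCommMonoid P] [Module R P] [AddCommMonoid Q] [Module R Q] [AddCommMonoid S] [Module R S]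
  [AddCommMonoid S'] [Module R S'] [AddCommMonoid T] [Module R T]

theorem comp_comp_eq_map_comp {δ : C →ₗ[R] C ⊗[R] C} {f g : C →ₗ[R] C}
    (hf : δ ∘ₗ f = TensorProduct.map f f ∘ₗ δ) (hg : δ ∘ₗ g = TensorProduct.map g g ∘ₗ δ) :
    δ ∘ₗ (f ∘ₗ g) = TensorProduct.map (f ∘ₗ g) (f ∘ₗ g) ∘ₗ δ := by
  rw [← LinearMap.comp_assoc, hf, LinearMap.comp_assoc, hg, ← LinearMap.comp_assoc,
    TensorProduct.map_comp]

theorem map_comp_map_eq_map_comp_map {f₁ : M →ₗ[R] N} {f₂ : N →ₗ[R] P} {f₁' : M →ₗ[R] N'}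
    {f₂' : N' →ₗ[R] P} {g₁ : Q →ₗ[R] S} {g₂ : S →ₗ[R] T} {g₁' : Q →ₗ[R] S'} {g₂' : S' →ₗ[R] T}
    (hf : f₂ ∘ₗ f₁ = f₂' ∘ₗ f₁') (hg : g₂ ∘ₗ g₁ = g₂' ∘ₗ g₁') :
    TensorProduct.map f₂ g₂ ∘ₗ TensorProduct.map f₁ g₁ =
      TensorProduct.map f₂' g₂' ∘ₗ TensorProduct.map f₁' g₁' := by
  rw [← TensorProduct.map_comp, ← TensorProduct.map_comp, hf, hg]

end TensorMaps

theorem IsHomComodule.map_id_comp {K C M : Type*} [Field K] [AddCommGroup C] [Module K C]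
    [AddCommGroup M] [Module K M] {δ : C →ₗ[K] C ⊗[K] C} {α γ : C →ₗ[K] C}
    {Δ : M →ₗ[K] C ⊗[K] M} {β : M →ₗ[K] M} (hcom : IsHomComodule K C M δ α Δ β)
    (hγα : γ ∘ₗ α = α ∘ₗ γ) (hδγ : δ ∘ₗ γ = TensorProduct.map γ γ ∘ₗ δ) :
    IsHomComodule K C M δ α (TensorProduct.map γ LinearMap.id ∘ₗ Δ) β := by
  obtain ⟨hβ, hcoassoc⟩ := hcom
  set Δ' := TensorProduct.map γ LinearMap.id ∘ₗ Δ
  constructor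
  · calc Δ' ∘ₗ β = (TensorProduct.map γ LinearMap.id ∘ₗ TensorProduct.map α β) ∘ₗ Δ := by
          rw [LinearMap.comp_assoc, LinearMap.comp_assoc, hβ]
      _ = (TensorProduct.map α β ∘ₗ TensorProduct.map γ LinearMap.id) ∘ₗ Δ := by
          rw [map_comp_map_eq_map_comp_map hγα
            ((LinearMap.id_comp β).trans (LinearMap.comp_id β).symm)]
      _ = TensorProduct.map α β ∘ₗ Δ' := LinearMap.comp_assoc _ _ _
  · calc TensorProduct.map α Δ' ∘ₗ Δ'
          = (TensorProduct.map γ (TensorProduct.map γ LinearMap.id) ∘ₗ TensorProduct.map α Δ) ∘ₗ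
              Δ := by
          rw [← LinearMap.comp_assoc,
            ← map_comp_map_eq_map_comp_map (g₁ := Δ) hγα (LinearMap.comp_id Δ').symm]
      _ = (TensorProduct.assoc K C C M).toLinearMap ∘ₗ
            (TensorProduct.map (TensorProduct.map γ γ) LinearMap.id ∘ₗ TensorProduct.map δ β) ∘ₗ
              Δ := by
          rw [LinearMap.comp_assoc, hcoassoc, ← LinearMap.comp_assoc,
            TensorProduct.map_map_comp_assoc_eq, LinearMap.comp_assoc, LinearMap.comp_assoc]
      _ = (TensorProduct.assoc K C C M).toLinearMap ∘ₗ TensorProduct.map δ β ∘ₗ Δ' := by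
          rw [map_comp_map_eq_map_comp_map hδγ.symm
            ((LinearMap.id_comp β).trans (LinearMap.comp_id β).symm), LinearMap.comp_assoc]

theorem stmt16_general {K C M : Type*} [Field K] [AddCommGroup C] [Module K C]
    [AddCommGroup M] [Module K M]
    (δ : C →ₗ[K] C ⊗[K] C) (α : C →ₗ[K] C)
    (hcoalg : δ ∘ₗ α = TensorProduct.map α α ∘ₗ δ ∧
      TensorProduct.map α δ ∘ₗ δ =
        (TensorProduct.assoc K C C C).toLinearMap ∘ₗ TensorProduct.map δ α ∘ₗ δ)
    (Δ : M →ₗ[K] C ⊗[K] M) (β : M →ₗ[K] M)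
    (hcom : IsHomComodule K C M δ α Δ β) :
    IsHomComodule K C M δ α (TensorProduct.map (α ∘ₗ α) LinearMap.id ∘ₗ Δ) β :=
  hcom.map_id_comp (LinearMap.comp_assoc α α α)
    (comp_comp_eq_map_comp hcoalg.1 hcoalg.1)

theorem stmt16 {K C M : Type*} [Field K] [CharZero K] [AddCommGroup C] [Module K C]
    [AddCommGroup M] [Module K M]
    (δ : C →ₗ[K] C ⊗[K] C) (α : C →ₗ[K] C)
    (hcoalg : δ ∘ₗ α = TensorProduct.map α α ∘ₗ δ ∧
      TensorProduct.map α δ ∘ₗ δ =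
        (TensorProduct.assoc K C C C).toLinearMap ∘ₗ TensorProduct.map δ α ∘ₗ δ)
    (Δ : M →ₗ[K] C ⊗[K] M) (β : M →ₗ[K] M)
    (hcom : IsHomComodule K C M δ α Δ β) :
    IsHomComodule K C M δ α (TensorProduct.map (α ∘ₗ α) LinearMap.id ∘ₗ Δ) β :=
  stmt16_general δ α hcoalg Δ β hcom
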